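/- For every natural number m and every real x, ∫_ℝ exp(2πi p x) · exp(−π p²) · He_m(2√π · p) dp = i^m · exp(−π x²) · He_m(2√π · x), where He_m is the m-th (probabilists') Hermite polynomial and the integral is over p ∈ ℝ with Lebesgue measure. That is, the Hermite function p ↦ e^{−πp²} He_m(2√π p) is an eigenfunction of the Fourier transform with kernel e^{2πipx}, with eigenvalue i^m. -/

import Mathlib

/-!
The operator `f ↦ 2πx f − f'` is turned by the inverse Fourier transform into `i` times itself,
because `𝓕⁻` exchanges multiplication by `x` with differentiation. The recurrence
`He_{m+1} = X He_m − He_m'` says that the same operator maps the `m`-th Hermite function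
`e^{−πx²} He_m(2√π x)` to `2√π` times the next one. The Gaussian `e^{−πx²}` is fixed by `𝓕⁻`,
so induction on `m` gives the eigenvalue `iᵐ`.
-/

open Polynomial MeasureTheory Real
open Complex (I)
open scoped FourierTransform

section CreationOp

variable {E : Type*} [NormedAddCommGroup E] [NormedSpace ℂ E]

noncomputable def creationOp (f : ℝ → E) (x : ℝ) : E := (2 * π * x) • f x - deriv f x

theorem creationOp_const_smul (c : ℂ) (f : ℝ → E) : creationOp (c • f) = c • creationOp f := by
  ext x
  simp [creationOp, deriv_const_smul_field, smul_sub, smul_comm c]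

theorem Real.fourier_sub {f g : ℝ → E} (hf : Integrable f) (hg : Integrable g) :
    𝓕 (f - g) = 𝓕 f - 𝓕 g := by
  ext w
  simp only [Real.fourier_eq, Pi.sub_apply, smul_sub]
  exact integral_sub ((Real.fourierIntegral_convergent_iff w).2 hf)
    ((Real.fourierIntegral_convergent_iff w).2 hg)

theorem Real.fourier_const_smul (c : ℂ) (f : ℝ → E) : 𝓕 (c • f) = c • 𝓕 f :=
  VectorFourier.fourierIntegral_const_smul _ _ _ _ _

theorem Real.fourierInv_const_smul (c : ℂ) (f : ℝ → E) : 𝓕⁻ (c • f) = c • 𝓕⁻ f :=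
  VectorFourier.fourierIntegral_const_smul _ _ _ _ _

theorem fourier_creationOp {f : ℝ → E} (hf : Integrable f)
    (hxf : Integrable fun x : ℝ ↦ x • f x) (hdf : Differentiable ℝ f)
    (hf' : Integrable (deriv f)) :
    𝓕 (creationOp f) = (-I) • creationOp (𝓕 f) := by
  have hmul : 𝓕 (fun x : ℝ ↦ (2 * π * x) • f x) = I • deriv (𝓕 f) := by
    have : (fun x : ℝ ↦ (-2 * π * I * x) • f x) = (-I) • fun x : ℝ ↦ (2 * π * x) • f x := by
      ext x
      rw [Pi.smul_apply, ← Complex.coe_smul, smul_smul]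
      push_cast
      ring_nf
    rw [Real.deriv_fourier hf hxf, this, Real.fourier_const_smul, smul_smul]
    simp
  have hxf' : Integrable fun x : ℝ ↦ (2 * π * x) • f x := by
    refine (hxf.smul (2 * π)).congr (ae_of_all _ fun x ↦ ?_)
    simp only [Pi.smul_apply, smul_smul]
  have hsplit : creationOp f = (fun x : ℝ ↦ (2 * π * x) • f x) - deriv f := rfl
  rw [hsplit, Real.fourier_sub hxf' hf', hmul, Real.fourier_deriv hf hdf hf']
  ext ξ
  simp only [creationOp, Pi.sub_apply, Pi.smul_apply, smul_sub, neg_smul]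
  rw [show (2 * π * I * ξ : ℂ) = I * ((2 * π * ξ : ℝ) : ℂ) by push_cast; ring, mul_smul,
    Complex.coe_smul]
  abel

theorem fourierInv_creationOp {f : ℝ → E} (hf : Integrable f)
    (hxf : Integrable fun x : ℝ ↦ x • f x) (hdf : Differentiable ℝ f)
    (hf' : Integrable (deriv f)) :
    𝓕⁻ (creationOp f) = I • creationOp (𝓕⁻ f) := by
  ext x
  have hinv : 𝓕⁻ f = fun y ↦ 𝓕 f (-y) := funext (Real.fourierInv_eq_fourier_neg f)
  rw [Real.fourierInv_eq_fourier_neg, fourier_creationOp hf hxf hdf hf', hinv]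
  simp [creationOp, deriv_comp_neg, smul_sub]

end CreationOp

theorem integrable_eval_mul_exp_neg_mul_sq {b : ℝ} (hb : 0 < b) (P : ℝ[X]) :
    Integrable fun x : ℝ ↦ P.eval x * rexp (-b * x ^ 2) := by
  simp only [eval_eq_sum_range, Finset.sum_mul, mul_assoc]
  refine integrable_finsetSum _ fun n _ ↦ Integrable.const_mul ?_ _
  simpa [Real.rpow_natCast] using
    integrable_rpow_mul_exp_neg_mul_sq hb (s := n) (by linarith [n.cast_nonneg (α := ℝ)])

noncomputable def hermiteFunction (m : ℕ) (x : ℝ) : ℂ :=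
  ↑(rexp (-π * x ^ 2) * aeval (2 * √π * x) (hermite m))

theorem hermiteFunction_eq_eval_mul (m : ℕ) :
    hermiteFunction m = fun x ↦
      ↑((((hermite m).map (Int.castRingHom ℝ)).comp (C (2 * √π) * X)).eval x *
        rexp (-π * x ^ 2)) := by
  ext x
  simp [hermiteFunction, aeval_def, eval₂_eq_eval_map, mul_comm]

theorem integrable_hermiteFunction (m : ℕ) : Integrable (hermiteFunction m) := by
  rw [hermiteFunction_eq_eval_mul]
  exact (integrable_eval_mul_exp_neg_mul_sq pi_pos _).ofReal

theorem integrable_smul_hermiteFunction (m : ℕ) :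
    Integrable fun x : ℝ ↦ x • hermiteFunction m x := by
  refine (integrable_eval_mul_exp_neg_mul_sq pi_pos
    (X * ((hermite m).map (Int.castRingHom ℝ)).comp (C (2 * √π) * X))).ofReal.congr
    (ae_of_all _ fun x ↦ ?_)
  simp [hermiteFunction_eq_eval_mul, Complex.real_smul, mul_assoc]

theorem hasDerivAt_hermiteFunction (m : ℕ) (x : ℝ) :
    HasDerivAt (hermiteFunction m)
      ((2 * π * x) • hermiteFunction m x - (2 * √π) • hermiteFunction (m + 1) x) x := by
  have hexp : HasDerivAt (fun y ↦ rexp (-π * y ^ 2)) (rexp (-π * x ^ 2) * (-π * (2 * x))) x := by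
    simpa using ((hasDerivAt_pow 2 x).const_mul (-π)).exp
  have hpoly := (Polynomial.hasDerivAt_aeval (hermite m) (2 * √π * x)).comp x
    ((hasDerivAt_id x).const_mul (2 * √π))
  have hsucc : aeval (2 * √π * x) (hermite (m + 1)) =
      2 * √π * x * aeval (2 * √π * x) (hermite m) -
        aeval (2 * √π * x) (derivative (hermite m)) := by
    simp [hermite_succ]
  have hsq : √π ^ 2 = π := sq_sqrt pi_pos.le
  convert (hexp.mul hpoly).ofReal_comp using 1
  · rfl
  simp only [hermiteFunction, Function.comp_apply, Complex.real_smul, hsucc]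
  norm_cast
  linear_combination (-4 * x * rexp (-π * x ^ 2) * aeval (2 * √π * x) (hermite m)) * hsq

theorem deriv_hermiteFunction (m : ℕ) :
    deriv (hermiteFunction m) =
      fun x ↦ (2 * π * x) • hermiteFunction m x - (2 * √π) • hermiteFunction (m + 1) x :=
  funext fun x ↦ (hasDerivAt_hermiteFunction m x).deriv

theorem integrable_deriv_hermiteFunction (m : ℕ) : Integrable (deriv (hermiteFunction m)) := by
  rw [deriv_hermiteFunction]
  refine (((integrable_smul_hermiteFunction m).smul (2 * π)).sub
    ((integrable_hermiteFunction (m + 1)).smul (2 * √π))).congr (ae_of_all _ fun x ↦ ?_)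
  simp [mul_assoc]

theorem creationOp_hermiteFunction (m : ℕ) :
    creationOp (hermiteFunction m) = (2 * √π : ℂ) • hermiteFunction (m + 1) := by
  ext x
  simp [creationOp, deriv_hermiteFunction, Complex.real_smul]

theorem fourierInv_hermiteFunction_zero : 𝓕⁻ (hermiteFunction 0) = hermiteFunction 0 := by
  have hgauss : hermiteFunction 0 = fun x : ℝ ↦ Complex.exp (-π * 1 * x ^ 2) := by
    ext x
    simp [hermiteFunction]
  ext x
  rw [Real.fourierInv_eq_fourier_neg, hgauss, fourier_gaussian_pi (by simp)]
  simp

theorem fourierInv_hermiteFunction (m : ℕ) :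
    𝓕⁻ (hermiteFunction m) = I ^ m • hermiteFunction m := by
  induction m with
  | zero => simpa using fourierInv_hermiteFunction_zero
  | succ m ih =>
    have hc : (2 * √π : ℂ) ≠ 0 := by exact_mod_cast (by positivity : (2 * √π : ℝ) ≠ 0)
    have key := fourierInv_creationOp (integrable_hermiteFunction m)
      (integrable_smul_hermiteFunction m)
      (fun x ↦ (hasDerivAt_hermiteFunction m x).differentiableAt)
      (integrable_deriv_hermiteFunction m)
    rw [ih, creationOp_const_smul, creationOp_hermiteFunction, Real.fourierInv_const_smul] at key
    refine smul_right_injective _ hc ?_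
    simp only [key, smul_smul, pow_succ']
    ring_nf

theorem hermite_fourier_eigenfunction (m : ℕ) (x : ℝ) :
    ∫ p : ℝ, Complex.exp (2 * (Real.pi : ℂ) * Complex.I * (p : ℂ) * (x : ℂ)) *
        ((Real.exp (-Real.pi * p ^ 2) : ℝ) : ℂ) *
        ((Polynomial.aeval (2 * Real.sqrt Real.pi * p) (Polynomial.hermite m) : ℝ) : ℂ) =
      Complex.I ^ m * ((Real.exp (-Real.pi * x ^ 2) : ℝ) : ℂ) *
        ((Polynomial.aeval (2 * Real.sqrt Real.pi * x) (Polynomial.hermite m) : ℝ) : ℂ) := by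
  have h := congrFun (fourierInv_hermiteFunction m) x
  rw [Real.fourierInv_eq'] at h
  simp only [hermiteFunction, Pi.smul_apply, smul_eq_mul] at h
  convert h using 1
  · congr 1
    ext p
    simp only [RCLike.inner_apply, conj_trivial]
    push_cast
    ring_nf
  · push_cast
    ring
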